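/- Let k be a commutative unital ring, A a unital k-algebra, and qA = (A[[λ]], ⋆) a formal deformation of A. Let P_0, Q_0 ∈ M_n(A) be idempotents and let P = Σ_{r≥0} P_r λ^r, Q = Σ_{r≥0} Q_r λ^r ∈ M_n(A)[[λ]] be ⋆-idempotents (P ⋆ P = P, Q ⋆ Q = Q) deforming P_0 and Q_0 (i.e. with zeroth coefficients P_0 and Q_0). Then the map I, defined on the k[[λ]]-submodule (P_0 M_n(A) Q_0)[[λ]] of M_n(A)[[λ]] consisting of series all of whose coefficients lie in P_0 M_n(A) Q_0, by I(B) = P ⋆ B ⋆ Q, is a k[[λ]]-module isomorphism onto the k[[λ]]-submodule P ⋆ M_n(A)[[λ]] ⋆ Q = { P ⋆ L ⋆ Q : L ∈ M_n(A)[[λ]] } of M_n(A)[[λ]]. -/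

import Mathlib

open scoped Matrix

/-- Cauchy-type convolution of two formal series along a family of
coefficient maps `B r : M → N → P`:  `(x ⋆ y) n = ∑_{r+i+j=n} B r (x i) (y j)`. -/
def fdConv {M N P : Type*} [AddCommMonoid P] (B : ℕ → M → N → P)
    (x : ℕ → M) (y : ℕ → N) : ℕ → P := fun n =>
  ∑ p ∈ Finset.HasAntidiagonal.antidiagonal n, ∑ q ∈ Finset.HasAntidiagonal.antidiagonal p.2, B p.1 (x q.1) (y q.2)

/-- The unit formal series `1 + 0·λ + 0·λ² + ⋯`. -/
def fdOne (A : Type*) [One A] [Zero A] : ℕ → A := fun n => if n = 0 then 1 else 0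

/-- An element viewed as a constant (order-zero) formal series. -/
def fdC {A : Type*} [Zero A] (a : A) : ℕ → A := fun n => if n = 0 then a else 0

/-- Coefficientwise star of a formal series. -/
def fdStar {A : Type*} [Star A] (x : ℕ → A) : ℕ → A := fun n => star (x n)

/-- Action of a scalar series `c ∈ k[[λ]]` on series with coefficients in a `k`-module. -/
def fdSmul {k M : Type*} [Semiring k] [AddCommMonoid M] [Module k M]
    (c : ℕ → k) (x : ℕ → M) : ℕ → M := fun n =>
  ∑ p ∈ Finset.HasAntidiagonal.antidiagonal n, c p.1 • x p.2

/-- Order-by-order extension of a family of maps `T r : E → F` to formal series: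
`(T x) n = ∑_{r+j=n} T r (x j)`. -/
def fdMap {E F : Type*} [AddCommMonoid F] (T : ℕ → E → F) (x : ℕ → E) : ℕ → F :=
  fun n => ∑ p ∈ Finset.HasAntidiagonal.antidiagonal n, T p.1 (x p.2)

/-- A formal deformation (à la Gerstenhaber) of a unital `k`-algebra `A`:
a family of `k`-bilinear cochains `C r` with `C 0` the original product, whose
convolution product on `A[[λ]]` is associative and unital (with the same unit). -/
structure FormalDeformation (k A : Type*) [CommRing k] [Ring A] [Algebra k A] where
  C : ℕ → A →ₗ[k] A →ₗ[k] A
  C_zero : ∀ a b : A, C 0 a b = a * b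
  assoc : ∀ x y z : ℕ → A,
    fdConv (fun r a b => C r a b) (fdConv (fun r a b => C r a b) x y) z =
      fdConv (fun r a b => C r a b) x (fdConv (fun r a b => C r a b) y z)
  one_mul : ∀ x : ℕ → A, fdConv (fun r a b => C r a b) (fdOne A) x = x
  mul_one : ∀ x : ℕ → A, fdConv (fun r a b => C r a b) x (fdOne A) = x

namespace FormalDeformation

variable {k A : Type*} [CommRing k] [Ring A] [Algebra k A]

/-- The deformed product on `A[[λ]]`. -/
def mul (D : FormalDeformation k A) : (ℕ → A) → (ℕ → A) → ℕ → A :=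
  fdConv fun r a b => D.C r a b

/-- A deformation of a `*`-algebra is Hermitian if the coefficientwise extension of
the involution is still an involution for the deformed product. -/
def IsHermitian [StarRing A] (D : FormalDeformation k A) : Prop :=
  ∀ x y : ℕ → A, fdStar (D.mul x y) = D.mul (fdStar y) (fdStar x)

/-- The extension of the deformation cochains to matrices. -/
def matC (D : FormalDeformation k A) (n : ℕ) (r : ℕ)
    (L S : Matrix (Fin n) (Fin n) A) : Matrix (Fin n) (Fin n) A :=
  Matrix.of fun i j => ∑ s, D.C r (L i s) (S s j)

/-- The deformed product on `M_n(A)[[λ]] = M_n(A[[λ]])`. -/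
def matMul (D : FormalDeformation k A) (n : ℕ) :
    (ℕ → Matrix (Fin n) (Fin n) A) → (ℕ → Matrix (Fin n) (Fin n) A) →
      ℕ → Matrix (Fin n) (Fin n) A :=
  fdConv (D.matC n)

/-- The deformed left action of `M_n(A)[[λ]]` on column vectors `A^n[[λ]]`. -/
def mvMul (D : FormalDeformation k A) (n : ℕ) :
    (ℕ → Matrix (Fin n) (Fin n) A) → (ℕ → Fin n → A) → ℕ → Fin n → A :=
  fdConv fun r L v => fun i => ∑ j, D.C r (L i j) (v j)

/-- The deformed right action of `A[[λ]]` on column vectors `A^n[[λ]]`. -/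
def vsMul (D : FormalDeformation k A) (n : ℕ) :
    (ℕ → Fin n → A) → (ℕ → A) → ℕ → Fin n → A :=
  fdConv fun r v a => fun i => D.C r (v i) a

end FormalDeformation

/-! The coefficient of `λ^m` in `I B = P ⋆ B ⋆ Q` is `P₀ B_m Q₀` plus terms involving only the
`B_j` with `j < m`. Looking at the lowest nonzero coefficient, `I` is therefore injective on corner
series, and a series fixed by `I` (such as any `P ⋆ L ⋆ Q`, as `P` and `Q` are idempotent) vanishes
once all its corner parts `P₀ X_m Q₀` do. For surjectivity, solve order by order: the fixed point
`B` of the causal map `X ↦ P₀ (X - I (X - L)) Q₀` is a corner series with `P₀ I (B - L) Q₀ = 0`,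
so the `I`-fixed series `I (B - L)` vanishes. -/

open Finset

section Convolution

variable {k M N P : Type*} [CommSemiring k] [AddCommMonoid M] [AddCommMonoid N]
  [AddCommMonoid P] [Module k M] [Module k N] [Module k P]

def fdConvBilin (β : ℕ → M →ₗ[k] N →ₗ[k] P) : (ℕ → M) →ₗ[k] (ℕ → N) →ₗ[k] ℕ → P :=
  LinearMap.mk₂ k (fdConv fun r a b => β r a b)
    (fun x x' y => by ext m; simp [fdConv, sum_add_distrib])
    (fun c x y => by ext m; simp [fdConv, smul_sum])
    (fun x y y' => by ext m; simp [fdConv, sum_add_distrib])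
    (fun c x y => by ext m; simp [fdConv, smul_sum])

variable (β : ℕ → M →ₗ[k] N →ₗ[k] P)

theorem fdConvBilin_apply (x : ℕ → M) (y : ℕ → N) :
    fdConvBilin β x y = fdConv (fun r a b => β r a b) x y := rfl

theorem fdConv_apply_of_forall_lt_eq_zero_right (x : ℕ → M) {y : ℕ → N} {m : ℕ}
    (hy : ∀ j < m, y j = 0) : fdConv (fun r a b => β r a b) x y m = β 0 (x 0) (y m) := by
  rw [fdConv, sum_eq_single_of_mem (0, m) (by simp), sum_eq_single_of_mem (0, m) (by simp)]
  · rintro ⟨i, j⟩ hij hne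
    rw [HasAntidiagonal.mem_antidiagonal] at hij
    rw [hy j (by grind), map_zero]
  · rintro ⟨r, l⟩ hrl hne
    rw [HasAntidiagonal.mem_antidiagonal] at hrl
    refine sum_eq_zero fun ⟨i, j⟩ hij => ?_
    rw [HasAntidiagonal.mem_antidiagonal] at hij
    rw [hy j (by grind), map_zero]

theorem fdConv_apply_of_forall_lt_eq_zero_left {x : ℕ → M} (y : ℕ → N) {m : ℕ}
    (hx : ∀ j < m, x j = 0) : fdConv (fun r a b => β r a b) x y m = β 0 (x m) (y 0) := by
  rw [fdConv, sum_eq_single_of_mem (0, m) (by simp), sum_eq_single_of_mem (m, 0) (by simp)]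
  · rintro ⟨i, j⟩ hij hne
    rw [HasAntidiagonal.mem_antidiagonal] at hij
    rw [hx i (by grind), map_zero, LinearMap.zero_apply]
  · rintro ⟨r, l⟩ hrl hne
    rw [HasAntidiagonal.mem_antidiagonal] at hrl
    refine sum_eq_zero fun ⟨i, j⟩ hij => ?_
    rw [HasAntidiagonal.mem_antidiagonal] at hij
    rw [hx i (by grind), map_zero, LinearMap.zero_apply]

theorem fdConv_fdSmul_right (c : ℕ → k) (x : ℕ → M) (y : ℕ → N) :
    fdConv (fun r a b => β r a b) x (fdSmul c y) =
      fdSmul c (fdConv (fun r a b => β r a b) x y) := by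
  funext m
  simp only [fdConv, fdSmul, map_sum, map_smul, smul_sum, sum_sigma']
  -- both sides sum `c s • β r (x i) (y t)` over all `r + i + s + t = m`
  refine sum_nbij'
    (fun ⟨⟨r, _⟩, ⟨i, _⟩, ⟨s, t⟩⟩ => ⟨(s, r + (i + t)), (r, i + t), (i, t)⟩)
    (fun ⟨⟨s, _⟩, ⟨r, _⟩, ⟨i, t⟩⟩ => ⟨(r, i + (s + t)), (i, s + t), (s, t)⟩)
    ?_ ?_ ?_ ?_ ?_ <;> aesop (add simp [add_assoc, add_left_comm])

theorem fdConv_fdSmul_left (c : ℕ → k) (x : ℕ → M) (y : ℕ → N) :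
    fdConv (fun r a b => β r a b) (fdSmul c x) y =
      fdSmul c (fdConv (fun r a b => β r a b) x y) := by
  funext m
  simp only [fdConv, fdSmul, map_sum, map_smul, LinearMap.sum_apply,
    LinearMap.smul_apply, smul_sum, sum_sigma']
  -- both sides sum `c s • β r (x i) (y j)` over all `r + s + i + j = m`
  refine sum_nbij'
    (fun ⟨⟨r, _⟩, ⟨_, j⟩, ⟨s, i⟩⟩ => ⟨(s, r + (i + j)), (r, i + j), (i, j)⟩)
    (fun ⟨⟨s, _⟩, ⟨r, _⟩, ⟨i, j⟩⟩ => ⟨(r, s + i + j), (s + i, j), (s, i)⟩)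
    ?_ ?_ ?_ ?_ ?_ <;> aesop (add simp [add_assoc, add_left_comm])

end Convolution

theorem exists_isFixedPt_of_causal {M : Type*} [Zero M] (G : (ℕ → M) → ℕ → M)
    (hG : ∀ X Y m, (∀ j < m, X j = Y j) → G X m = G Y m) : ∃ X, Function.IsFixedPt G X := by
  refine ⟨fun m => Nat.strongRec (fun m f => G (fun j => if h : j < m then f j h else 0) m) m, ?_⟩
  funext m
  rw [Nat.strongRec_eq]
  exact hG _ _ m fun j hj => by rw [dif_pos hj]

theorem mul_mul_mul_of_isIdempotentElem {R : Type*} [Semigroup R] {p q : R}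
    (hp : IsIdempotentElem p) (hq : IsIdempotentElem q) (w : R) :
    p * (p * w * q) * q = p * w * q := by
  rw [← mul_assoc, ← mul_assoc, hp.eq, mul_assoc, hq.eq]

namespace FormalDeformation

variable {k A : Type*} [CommRing k] [Ring A] [Algebra k A] (D : FormalDeformation k A) (n : ℕ)

def matCBilin (r : ℕ) :
    Matrix (Fin n) (Fin n) A →ₗ[k] Matrix (Fin n) (Fin n) A →ₗ[k] Matrix (Fin n) (Fin n) A :=
  LinearMap.mk₂ k (D.matC n r)
    (fun L L' S => by ext i j; simp [matC, sum_add_distrib])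
    (fun c L S => by ext i j; simp [matC, smul_sum])
    (fun L S S' => by ext i j; simp [matC, sum_add_distrib])
    (fun c L S => by ext i j; simp [matC, smul_sum])

theorem matMul_eq_fdConv : D.matMul n = fdConv fun r L S => D.matCBilin n r L S := rfl

theorem matC_zero (L S : Matrix (Fin n) (Fin n) A) : D.matC n 0 L S = L * S := by
  ext i j
  simp [matC, D.C_zero, Matrix.mul_apply]

theorem matMul_apply_of_forall_lt_eq_zero_right (X : ℕ → Matrix (Fin n) (Fin n) A)
    {Z : ℕ → Matrix (Fin n) (Fin n) A} {m : ℕ} (hZ : ∀ j < m, Z j = 0) :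
    D.matMul n X Z m = X 0 * Z m :=
  (fdConv_apply_of_forall_lt_eq_zero_right (D.matCBilin n) X hZ).trans (D.matC_zero n _ _)

theorem matMul_apply_of_forall_lt_eq_zero_left {Z : ℕ → Matrix (Fin n) (Fin n) A}
    (Y : ℕ → Matrix (Fin n) (Fin n) A) {m : ℕ} (hZ : ∀ j < m, Z j = 0) :
    D.matMul n Z Y m = Z m * Y 0 :=
  (fdConv_apply_of_forall_lt_eq_zero_left (D.matCBilin n) Y hZ).trans (D.matC_zero n _ _)

theorem matMul_apply_zero (X Y : ℕ → Matrix (Fin n) (Fin n) A) :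
    D.matMul n X Y 0 = X 0 * Y 0 :=
  D.matMul_apply_of_forall_lt_eq_zero_right n X fun j hj => absurd hj j.not_lt_zero

theorem matMul_entry (X Y : ℕ → Matrix (Fin n) (Fin n) A) (i j : Fin n) :
    (fun m => D.matMul n X Y m i j) =
      ∑ s, fdConvBilin D.C (fun t => X t i s) (fun t => Y t s j) := by
  funext m
  simp only [matMul, fdConv, matC, Matrix.sum_apply, Matrix.of_apply, Finset.sum_apply,
    fdConvBilin_apply]
  rw [sum_comm]
  exact sum_congr rfl fun _ _ => sum_comm

theorem fdConvBilin_C_assoc (x y z : ℕ → A) :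
    fdConvBilin D.C (fdConvBilin D.C x y) z = fdConvBilin D.C x (fdConvBilin D.C y z) :=
  D.assoc x y z

theorem matMul_assoc (X Y Z : ℕ → Matrix (Fin n) (Fin n) A) :
    D.matMul n (D.matMul n X Y) Z = D.matMul n X (D.matMul n Y Z) := by
  have h : ∀ i j, (fun m => D.matMul n (D.matMul n X Y) Z m i j) =
      fun m => D.matMul n X (D.matMul n Y Z) m i j := by
    intro i j
    simp only [matMul_entry, map_sum, LinearMap.sum_apply]
    rw [sum_comm]
    exact sum_congr rfl fun s _ => sum_congr rfl fun t _ => D.fdConvBilin_C_assoc _ _ _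
  funext m
  ext i j
  exact congrFun (h i j) m

def sandwich (P Q : ℕ → Matrix (Fin n) (Fin n) A) :
    (ℕ → Matrix (Fin n) (Fin n) A) →ₗ[k] ℕ → Matrix (Fin n) (Fin n) A :=
  (fdConvBilin (D.matCBilin n)).flip Q ∘ₗ fdConvBilin (D.matCBilin n) P

variable {P Q : ℕ → Matrix (Fin n) (Fin n) A}

theorem sandwich_apply (B : ℕ → Matrix (Fin n) (Fin n) A) :
    D.sandwich n P Q B = D.matMul n (D.matMul n P B) Q := rfl

theorem sandwich_apply_of_forall_lt_eq_zero {Z : ℕ → Matrix (Fin n) (Fin n) A} {m : ℕ}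
    (hZ : ∀ j < m, Z j = 0) : D.sandwich n P Q Z m = P 0 * Z m * Q 0 := by
  have hPZ : ∀ j < m, D.matMul n P Z j = 0 := fun j hj => by
    rw [D.matMul_apply_of_forall_lt_eq_zero_right n P fun i hi => hZ i (hi.trans hj),
      hZ j hj, Matrix.mul_zero]
  rw [sandwich_apply, D.matMul_apply_of_forall_lt_eq_zero_left n Q hPZ,
    D.matMul_apply_of_forall_lt_eq_zero_right n P hZ]

theorem sandwich_fdSmul (c : ℕ → k) (B : ℕ → Matrix (Fin n) (Fin n) A) :
    D.sandwich n P Q (fdSmul c B) = fdSmul c (D.sandwich n P Q B) := by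
  rw [sandwich_apply, sandwich_apply, matMul_eq_fdConv, fdConv_fdSmul_right, fdConv_fdSmul_left]

theorem sandwich_sandwich (hP : D.matMul n P P = P) (hQ : D.matMul n Q Q = Q)
    (B : ℕ → Matrix (Fin n) (Fin n) A) :
    D.sandwich n P Q (D.sandwich n P Q B) = D.sandwich n P Q B := by
  simp only [sandwich_apply, ← D.matMul_assoc n P, hP, D.matMul_assoc n _ Q Q, hQ]

theorem eq_zero_of_sandwich_eq_zero {X : ℕ → Matrix (Fin n) (Fin n) A}
    (hX : ∀ m, P 0 * X m * Q 0 = X m) (h : D.sandwich n P Q X = 0) : X = 0 := by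
  funext m
  induction m using Nat.strong_induction_on with
  | _ m ih => rw [← hX, ← D.sandwich_apply_of_forall_lt_eq_zero n ih, h, Pi.zero_apply]

theorem eq_zero_of_sandwich_eq_self {X : ℕ → Matrix (Fin n) (Fin n) A}
    (h : D.sandwich n P Q X = X) (hX : ∀ m, P 0 * X m * Q 0 = 0) : X = 0 := by
  funext m
  induction m using Nat.strong_induction_on with
  | _ m ih => rw [← h, D.sandwich_apply_of_forall_lt_eq_zero n ih, hX, Pi.zero_apply]

theorem sandwich_injOn :
    Set.InjOn (D.sandwich n P Q) {B | ∀ m, P 0 * B m * Q 0 = B m} := by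
  intro B hB B' hB' h
  have hc : ∀ m, P 0 * (B - B') m * Q 0 = (B - B') m := fun m => by
    simp only [Pi.sub_apply, mul_sub, sub_mul, hB m, hB' m]
  exact sub_eq_zero.1 (D.eq_zero_of_sandwich_eq_zero n hc (by rw [map_sub, h, sub_self]))

theorem exists_corner_sandwich_eq (hP : D.matMul n P P = P) (hQ : D.matMul n Q Q = Q)
    (L : ℕ → Matrix (Fin n) (Fin n) A) : ∃ B : ℕ → Matrix (Fin n) (Fin n) A,
      (∀ m, P 0 * B m * Q 0 = B m) ∧ D.sandwich n P Q B = D.sandwich n P Q L := by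
  have hP₀ : IsIdempotentElem (P 0) := by rw [IsIdempotentElem, ← D.matMul_apply_zero, hP]
  have hQ₀ : IsIdempotentElem (Q 0) := by rw [IsIdempotentElem, ← D.matMul_apply_zero, hQ]
  set I := D.sandwich n P Q
  let G : (ℕ → Matrix (Fin n) (Fin n) A) → ℕ → Matrix (Fin n) (Fin n) A :=
    fun X m => P 0 * (X - I (X - L)) m * Q 0
  have hG : ∀ X Y m, (∀ j < m, X j = Y j) → G X m = G Y m := by
    intro X Y m hXY
    have hI : I (X - Y) m = P 0 * (X - Y) m * Q 0 :=
      D.sandwich_apply_of_forall_lt_eq_zero n fun j hj => sub_eq_zero.2 (hXY j hj)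
    have hdiff : (X - I (X - L)) - (Y - I (Y - L)) = (X - Y) - I (X - Y) := by
      simp only [map_sub]
      abel
    rw [← sub_eq_zero]
    simp only [G]
    rw [← sub_mul, ← mul_sub, ← Pi.sub_apply, hdiff, Pi.sub_apply, hI, mul_sub,
      sub_mul, mul_mul_mul_of_isIdempotentElem hP₀ hQ₀, sub_self]
  obtain ⟨B, hB⟩ := exists_isFixedPt_of_causal G hG
  have hcorner : ∀ m, P 0 * B m * Q 0 = B m := fun m => by
    rw [← congrFun hB m]
    exact mul_mul_mul_of_isIdempotentElem hP₀ hQ₀ _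
  have hker : ∀ m, P 0 * I (B - L) m * Q 0 = 0 := fun m => by
    have h : P 0 * (B - I (B - L)) m * Q 0 = B m := congrFun hB m
    rwa [Pi.sub_apply, mul_sub, sub_mul, hcorner, sub_eq_self] at h
  have h := D.eq_zero_of_sandwich_eq_self n (D.sandwich_sandwich n hP hQ (B - L)) hker
  exact ⟨B, hcorner, sub_eq_zero.1 (by rwa [map_sub] at h)⟩

end FormalDeformation

theorem corner_module_isomorphism_general {k A : Type*} [CommRing k] [Ring A] [Algebra k A]
    (D : FormalDeformation k A) (n : ℕ)
    (P₀ Q₀ : Matrix (Fin n) (Fin n) A)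
    (P Q : ℕ → Matrix (Fin n) (Fin n) A)
    (hP : D.matMul n P P = P) (hQ : D.matMul n Q Q = Q)
    (hP0 : P 0 = P₀) (hQ0 : Q 0 = Q₀) :
    -- `I` is additive
    (∀ B B' : ℕ → Matrix (Fin n) (Fin n) A,
      D.matMul n (D.matMul n P (B + B')) Q =
        D.matMul n (D.matMul n P B) Q + D.matMul n (D.matMul n P B') Q) ∧
    -- `I` is `k[[λ]]`-linear
    (∀ (c : ℕ → k) (B : ℕ → Matrix (Fin n) (Fin n) A),
      D.matMul n (D.matMul n P (fdSmul c B)) Q =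
        fdSmul c (D.matMul n (D.matMul n P B) Q)) ∧
    -- `I` is injective on series with coefficients in the corner `P₀ Mₙ(A) Q₀`
    (∀ B B' : ℕ → Matrix (Fin n) (Fin n) A,
      (∀ m, P₀ * B m * Q₀ = B m) → (∀ m, P₀ * B' m * Q₀ = B' m) →
      D.matMul n (D.matMul n P B) Q = D.matMul n (D.matMul n P B') Q → B = B') ∧
    -- `I` maps the corner series onto `P ⋆ Mₙ(qA) ⋆ Q`
    (∀ L : ℕ → Matrix (Fin n) (Fin n) A,
      ∃ B : ℕ → Matrix (Fin n) (Fin n) A, (∀ m, P₀ * B m * Q₀ = B m) ∧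
        D.matMul n (D.matMul n P B) Q = D.matMul n (D.matMul n P L) Q) := by
  subst hP0 hQ0
  exact ⟨fun B B' => map_add (D.sandwich n P Q) B B', fun c B => D.sandwich_fdSmul n c B,
    fun B B' hB hB' h => D.sandwich_injOn n hB hB' h, D.exists_corner_sandwich_eq n hP hQ⟩

/-- Lemma 2.4, "ILem". For idempotents `P₀, Q₀ ∈ Mₙ(A)` and
⋆-idempotents `P, Q` deforming them, the map `I(B) = P ⋆ B ⋆ Q` is a
`k[[λ]]`-module isomorphism from `(P₀ Mₙ(A) Q₀)[[λ]]` onto `P ⋆ Mₙ(qA) ⋆ Q`. -/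
theorem corner_module_isomorphism {k A : Type*} [CommRing k] [Ring A] [Algebra k A]
    (D : FormalDeformation k A) (n : ℕ)
    (P₀ Q₀ : Matrix (Fin n) (Fin n) A)
    (hP₀ : P₀ * P₀ = P₀) (hQ₀ : Q₀ * Q₀ = Q₀)
    (P Q : ℕ → Matrix (Fin n) (Fin n) A)
    (hP : D.matMul n P P = P) (hQ : D.matMul n Q Q = Q)
    (hP0 : P 0 = P₀) (hQ0 : Q 0 = Q₀) :
    -- `I` is additive
    (∀ B B' : ℕ → Matrix (Fin n) (Fin n) A,
      D.matMul n (D.matMul n P (B + B')) Q =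
        D.matMul n (D.matMul n P B) Q + D.matMul n (D.matMul n P B') Q) ∧
    -- `I` is `k[[λ]]`-linear
    (∀ (c : ℕ → k) (B : ℕ → Matrix (Fin n) (Fin n) A),
      D.matMul n (D.matMul n P (fdSmul c B)) Q =
        fdSmul c (D.matMul n (D.matMul n P B) Q)) ∧
    -- `I` is injective on series with coefficients in the corner `P₀ Mₙ(A) Q₀`
    (∀ B B' : ℕ → Matrix (Fin n) (Fin n) A,
      (∀ m, P₀ * B m * Q₀ = B m) → (∀ m, P₀ * B' m * Q₀ = B' m) →
      D.matMul n (D.matMul n P B) Q = D.matMul n (D.matMul n P B') Q → B = B') ∧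
    -- `I` maps the corner series onto `P ⋆ Mₙ(qA) ⋆ Q`
    (∀ L : ℕ → Matrix (Fin n) (Fin n) A,
      ∃ B : ℕ → Matrix (Fin n) (Fin n) A, (∀ m, P₀ * B m * Q₀ = B m) ∧
        D.matMul n (D.matMul n P B) Q = D.matMul n (D.matMul n P L) Q) :=
  corner_module_isomorphism_general D n P₀ Q₀ P Q hP hQ hP0 hQ0
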